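/- arXiv:1507.06580 — 2 statements merged into one kernel-verified Lean document; each statement's English description precedes it below -/
import Mathlib

section
/- Let f, g : ℝ → ℝ be convex functions with f nonnegative. Let x₀, α ∈ ℝ with α - 1 < x₀ < α, suppose g(α) < -ε for some ε > 0, and suppose f is nondecreasing on (x₀, ∞) (i.e., f'(x) ≥ 0 for all x > x₀). Let μ be a probability measure supported on [x₀, α] whose density with respect to Lebesgue measure is bounded above by some β > 1. Then μ({x : |f(x) - g(x)| > (1/(4β)) · max(ε, f(x))}) ≥ 1/2. -/
/-!
Call `x` good if `|f x - g x| ≤ c · max ε (f x)`, with `c = 1 / (4β)`. At a good point `g` is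
close to `f`, while `g α < -ε`; convexity of `g` on `[a, α]` then forbids two good points
`a < b` of `(x₀, α]` farther apart than `2c`, because `f` is nondecreasing there and
`α - a < 1`. So the good points of `[x₀, α]` have Lebesgue measure at most `2c`, hence
`μ`-measure at most `2cβ = 1/2`, and the remaining points carry at least half of `μ`.
-/

open MeasureTheory Set

theorem ConvexOn.sub_mul_le_of_le_of_le {s : Set ℝ} {g : ℝ → ℝ} (hg : ConvexOn ℝ s g)
    {a b c : ℝ} (ha : a ∈ s) (hc : c ∈ s) (hab : a ≤ b) (hbc : b ≤ c) :
    (c - a) * g b ≤ (c - b) * g a + (b - a) * g c := by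
  rcases hab.eq_or_lt with rfl | hab
  · simp
  rcases hbc.eq_or_lt with rfl | hbc
  · simp
  exact hg.secant_mono_aux1 ha hc hab hbc

theorem sub_le_of_abs_sub_le_mul_max {f g : ℝ → ℝ} {a b α ε c : ℝ}
    (hg : ConvexOn ℝ (Icc a α) g) (hab : a < b) (hbα : b ≤ α) (hαa : α - a ≤ 1)
    (hε : 0 < ε) (hc : 0 ≤ c) (hgα : g α < -ε) (hfab : f a ≤ f b) (hfb : 0 ≤ f b)
    (ha : |f a - g a| ≤ c * max ε (f a)) (hb : |f b - g b| ≤ c * max ε (f b)) :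
    b - a ≤ 2 * c := by
  set M := max ε (f b)
  have hM : 0 < M := lt_max_of_lt_left hε
  have hMle : M ≤ f b + ε := max_le (by linarith) (by linarith)
  have hga : g a ≤ f b + c * M := by
    have hMa : c * max ε (f a) ≤ c * M := mul_le_mul_of_nonneg_left (max_le_max le_rfl hfab) hc
    linarith [(abs_le.1 ha).1]
  have hgb : f b - c * M ≤ g b := by linarith [(abs_le.1 hb).2]
  have hconv := hg.sub_mul_le_of_le_of_le (left_mem_Icc.2 (hab.le.trans hbα))
    (right_mem_Icc.2 (hab.le.trans hbα)) hab.le hbα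
  -- Combining the three bounds on `g` gives `(b - a) (f b + ε) ≤ (α - a + α - b) c M`.
  have key : (b - a) * M ≤ 2 * c * M := by
    nlinarith [mul_le_mul_of_nonneg_left hga (sub_nonneg.2 hbα),
      mul_le_mul_of_nonneg_left hgb (sub_nonneg.2 (hab.le.trans hbα)),
      mul_le_mul_of_nonneg_left hgα.le (sub_nonneg.2 hab.le),
      mul_le_mul_of_nonneg_left hMle (sub_nonneg.2 hab.le),
      mul_nonneg (mul_nonneg hc hM.le) (sub_nonneg.2 hab.le),
      mul_nonneg (mul_nonneg hc hM.le) (sub_nonneg.2 hαa)]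
  exact le_of_mul_le_mul_right key hM

theorem Real.volume_le_of_forall_sub_le {s : Set ℝ} {δ : ℝ}
    (h : ∀ a ∈ s, ∀ b ∈ s, a < b → b - a ≤ δ) : volume s ≤ ENNReal.ofReal δ := by
  refine (Real.volume_le_diam s).trans (Metric.ediam_le fun x hx y hy => ?_)
  rcases lt_trichotomy x y with hxy | rfl | hxy
  · rw [edist_comm, edist_dist, Real.dist_eq, abs_of_pos (sub_pos.2 hxy)]
    exact ENNReal.ofReal_le_ofReal (h x hx y hy hxy)
  · simp
  · rw [edist_dist, Real.dist_eq, abs_of_pos (sub_pos.2 hxy)]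
    exact ENNReal.ofReal_le_ofReal (h y hy x hx hxy)

theorem half_le_measure_compl {Ω : Type*} [MeasurableSpace Ω] {μ : Measure Ω}
    [IsProbabilityMeasure μ] {s : Set Ω} (hs : μ s ≤ 1 / 2) : 1 / 2 ≤ μ sᶜ := by
  have h := measure_univ_le_add_compl s (μ := μ)
  rw [measure_univ, ← ENNReal.add_halves 1] at h
  exact (ENNReal.add_le_add_iff_left (by simp)).1 (h.trans (add_le_add_left hs _))

theorem stmt0_general (f g : ℝ → ℝ) (hg : ConvexOn ℝ Set.univ g)
    (hf0 : ∀ x, 0 ≤ f x) (x₀ α ε β : ℝ) (hx₀ : α - 1 < x₀)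
    (hε : 0 < ε) (hgα : g α < -ε)
    (hmono : MonotoneOn f (Set.Ioi x₀))
    (μ : Measure ℝ) [IsProbabilityMeasure μ]
    (hsupp : μ (Set.Icc x₀ α)ᶜ = 0)
    (hβ : 1 < β)
    (hdens : ∀ s : Set ℝ, μ s ≤ ENNReal.ofReal β * volume s) :
    (1 : ENNReal) / 2 ≤ μ {x : ℝ | |f x - g x| > (1 / (4 * β)) * max ε (f x)} := by
  have hβ0 : 0 < β := by linarith
  set c := 1 / (4 * β)
  set S := {x | |f x - g x| ≤ c * max ε (f x)}
  have hclose : ∀ a ∈ S ∩ Ioc x₀ α, ∀ b ∈ S ∩ Ioc x₀ α, a < b → b - a ≤ 2 * c :=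
    fun a ha b hb hab => sub_le_of_abs_sub_le_mul_max (hg.subset (subset_univ _) (convex_Icc _ _)) hab hb.2.2 (by linarith [ha.2.1])
      hε (by positivity) hgα (hmono ha.2.1 hb.2.1 hab.le) (hf0 b) ha.1 hb.1
  have hcover : S ∩ Icc x₀ α ⊆ insert x₀ (S ∩ Ioc x₀ α) := by
    rintro x ⟨hxS, hx₀x, hxα⟩
    rcases hx₀x.eq_or_lt with rfl | hx₀x
    · exact mem_insert _ _
    · exact Or.inr ⟨hxS, hx₀x, hxα⟩
  have hμS : μ S ≤ 1 / 2 := calc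
    μ S = μ (S ∩ Icc x₀ α) := (measure_inter_conull hsupp).symm
    _ ≤ ENNReal.ofReal β * volume (insert x₀ (S ∩ Ioc x₀ α)) :=
      (hdens _).trans (by gcongr)
    _ ≤ ENNReal.ofReal β * ENNReal.ofReal (2 * c) := by
      rw [measure_congr (insert_ae_eq_self _ _)]
      gcongr
      exact Real.volume_le_of_forall_sub_le hclose
    _ = 1 / 2 := by
      rw [← ENNReal.ofReal_mul hβ0.le, show β * (2 * c) = 2⁻¹ by simp only [c]; field_simp; norm_num]
      simp
  simpa only [S, compl_ofPred, not_le] using half_le_measure_compl hμS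

theorem stmt0 (f g : ℝ → ℝ) (hf : ConvexOn ℝ Set.univ f) (hg : ConvexOn ℝ Set.univ g)
    (hf0 : ∀ x, 0 ≤ f x) (x₀ α ε β : ℝ) (hx₀ : α - 1 < x₀) (hx₀' : x₀ < α)
    (hε : 0 < ε) (hgα : g α < -ε)
    (hmono : MonotoneOn f (Set.Ioi x₀))
    (μ : Measure ℝ) [IsProbabilityMeasure μ]
    (hsupp : μ (Set.Icc x₀ α)ᶜ = 0)
    (hβ : 1 < β)
    (hdens : ∀ s : Set ℝ, μ s ≤ ENNReal.ofReal β * volume s) :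
    (1 : ENNReal) / 2 ≤ μ {x : ℝ | |f x - g x| > (1 / (4 * β)) * max ε (f x)} :=
  stmt0_general f g hg hf0 x₀ α ε β hx₀ hε hgα hmono μ hsupp hβ hdens
end

section
/- Let L < 0 and let Y be a random variable taking values in [-1, ∞) with E[Y] = |L| and P(Y > 1) = 0 (i.e., Y ∈ [-1,1] with mean |L| > 0). Then there exists ε ∈ [|L|/2, 1] such that P(Y ≥ ε) ≥ |L| / (2 log(2/|L|) · ε). -/
/-!
Put `k = |L| / (2 log (2/|L|))`. If `P(Y ≥ t) < k / t` for every `t ∈ (|L|/2, 1]`, the layer-cake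
formula gives `|L| = E[Y] ≤ E[Y⁺] = ∫₀¹ P(Y ≥ t) dt < |L|/2 + ∫_{|L|/2}^1 k / t dt = |L|`.
-/

open MeasureTheory Set

theorem antitone_measureReal_Ici (ν : Measure ℝ) [IsFiniteMeasure ν] :
    Antitone fun t ↦ ν.real (Ici t) :=
  fun _ _ hst ↦ measureReal_mono (Ici_subset_Ici.mpr hst)

theorem integral_le_add_intervalIntegral_measureReal_Ici {ν : Measure ℝ} [IsFiniteMeasure ν]
    {a b : ℝ} (ha : 0 ≤ a) (hab : a ≤ b) (hint : Integrable id ν) (hb : ∀ᵐ x ∂ν, x ≤ b) :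
    ∫ x, x ∂ν ≤ a * ν.real univ + ∫ t in a..b, ν.real (Ici t) := by
  have hanti := antitone_measureReal_Ici ν
  have hpos : Integrable (fun x ↦ max x 0) ν := hint.pos_part
  have hlayer : ∫ x, max x 0 ∂ν = ∫ t in (0 : ℝ)..b, ν.real (Ici t) := by
    rw [hpos.integral_eq_integral_Ioc_meas_le (.of_forall fun x ↦ le_max_right x 0)
      (by filter_upwards [hb] with x hx using max_le hx (ha.trans hab)),
      intervalIntegral.integral_of_le (ha.trans hab)]
    refine setIntegral_congr_fun measurableSet_Ioc fun t ht ↦ ?_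
    simp only [le_max_iff, not_le.mpr ht.1, or_false]
    rfl
  calc ∫ x, x ∂ν ≤ ∫ x, max x 0 ∂ν := integral_mono hint hpos fun x ↦ le_max_left x 0
    _ = (∫ t in (0 : ℝ)..a, ν.real (Ici t)) + ∫ t in a..b, ν.real (Ici t) := by
      rw [hlayer, intervalIntegral.integral_add_adjacent_intervals hanti.intervalIntegrable
        hanti.intervalIntegrable]
    _ ≤ a * ν.real univ + ∫ t in a..b, ν.real (Ici t) := by
      gcongr
      calc ∫ t in (0 : ℝ)..a, ν.real (Ici t) ≤ ∫ _ in (0 : ℝ)..a, ν.real univ :=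
            intervalIntegral.integral_mono_on ha hanti.intervalIntegrable
              intervalIntegrable_const fun t _ ↦ measureReal_mono (subset_univ _)
        _ = a * ν.real univ := by simp

theorem intervalIntegral_lt_mul_log_of_lt_div {f : ℝ → ℝ} {a b k : ℝ} (ha : 0 < a) (hab : a < b)
    (hf : IntervalIntegrable f volume a b) (hlt : ∀ t ∈ Ioc a b, f t < k / t) :
    ∫ t in a..b, f t < k * Real.log (b / a) := by
  have hinv : IntervalIntegrable (fun t ↦ k / t) volume a b :=
    (continuousOn_const.div continuousOn_id fun t ht ↦
      (ha.trans_le (by rw [uIcc_of_le hab.le] at ht; exact ht.1)).ne').intervalIntegrable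
  calc ∫ t in a..b, f t < ∫ t in a..b, k / t := by
        refine intervalIntegral.integral_lt_integral_of_ae_le_of_measure_setOfPred_lt_ne_zero
          hab.le hf hinv ((ae_restrict_iff' measurableSet_Ioc).mpr
            (.of_forall fun t ht ↦ (hlt t ht).le)) ?_
        rw [Measure.restrict_apply' measurableSet_Ioc,
          inter_eq_right.mpr (show Ioc a b ⊆ {t | f t < k / t} from hlt), Real.volume_Ioc]
        simpa using hab
    _ = k * Real.log (b / a) := by
      simp only [div_eq_mul_inv k, intervalIntegral.integral_const_mul,
        integral_inv_of_pos ha (ha.trans hab)]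

theorem exists_div_le_measureReal_Ici_of_le_integral {ν : Measure ℝ} [IsFiniteMeasure ν]
    {a b k : ℝ} (ha : 0 < a) (hab : a < b) (hint : Integrable id ν) (hb : ∀ᵐ x ∂ν, x ≤ b)
    (hmean : a * ν.real univ + k * Real.log (b / a) ≤ ∫ x, x ∂ν) :
    ∃ ε ∈ Ioc a b, k / ε ≤ ν.real (Ici ε) := by
  by_contra! htail
  have hlayer := integral_le_add_intervalIntegral_measureReal_Ici ha.le hab.le hint hb
  have hharmonic := intervalIntegral_lt_mul_log_of_lt_div ha hab
    (antitone_measureReal_Ici ν).intervalIntegrable htail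
  linarith

theorem stmt1 (L : ℝ) (hL : L < 0) (ν : Measure ℝ) [IsProbabilityMeasure ν]
    (hsupp : ν (Set.Icc (-1 : ℝ) 1)ᶜ = 0)
    (hmean : ∫ x, x ∂ν = |L|) :
    ∃ ε : ℝ, |L| / 2 ≤ ε ∧ ε ≤ 1 ∧
      ENNReal.ofReal (|L| / (2 * Real.log (2 / |L|) * ε)) ≤ ν {x : ℝ | ε ≤ x} := by
  set c := |L|
  have hc : 0 < c := abs_pos.mpr hL.ne
  have hIcc : ∀ᵐ x ∂ν, x ∈ Icc (-1 : ℝ) 1 :=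
    (measure_eq_zero_iff_ae_notMem.mp hsupp).mono fun _ ↦ not_not.mp
  have hle : ∀ᵐ x ∂ν, x ≤ 1 := hIcc.mono fun _ hx ↦ hx.2
  have hint : Integrable id ν :=
    .of_bound measurable_id.aestronglyMeasurable 1 (hIcc.mono fun _ hx ↦ abs_le.mpr hx)
  have hc1 : c ≤ 1 := by
    simpa [hmean] using integral_mono_ae hint (integrable_const 1) hle
  have hlog : 0 < Real.log (2 / c) := Real.log_pos (by rw [lt_div_iff₀ hc]; linarith)
  have hbudget : c / 2 * ν.real univ + c / (2 * Real.log (2 / c)) * Real.log (1 / (c / 2)) =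
      ∫ x, x ∂ν := by
    rw [probReal_univ, hmean, one_div_div]
    field_simp
    ring
  obtain ⟨ε, hε, hbound⟩ := exists_div_le_measureReal_Ici_of_le_integral (half_pos hc)
    (by linarith) hint hle hbudget.le
  refine ⟨ε, hε.1.le, hε.2, ?_⟩
  rwa [ENNReal.ofReal_le_iff_le_toReal (measure_ne_top ν _), ← div_div]
end
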